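/- Let D and K be finite-dimensional vector spaces over ℂ and H = D × K. For F ∈ End(H), write F^{DD} : D → D, F^{DK} : K → D, F^{KD} : D → K, F^{KK} : K → K for the block components of F. For F ∈ End(H) and A ∈ Hom(D,K), set L_F(A) := −F^{KD} − F^{KK} ∘ A + A ∘ F^{DD} + A ∘ F^{DK} ∘ A, and set η_{D,K}(F,G) := tr(F^{DK} ∘ G^{KD}) − tr(G^{DK} ∘ F^{KD}). Then for all F, G ∈ End(H) and all A ∈ Hom(D,K): tr(G^{DK} ∘ L_F(A)) − tr(F^{DK} ∘ L_G(A)) = tr([F,G]^{DK} ∘ A) + η_{D,K}(F,G), where [F,G] = F ∘ G − G ∘ F. -/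

import Mathlib

section

variable {D K : Type*} [AddCommGroup D] [Module ℂ D] [AddCommGroup K] [Module ℂ K]

/-- The block component `F^{DD} : D → D` of `F ∈ End(D × K)`. -/
noncomputable def blockDD (F : (D × K) →ₗ[ℂ] (D × K)) : D →ₗ[ℂ] D :=
  LinearMap.fst ℂ D K ∘ₗ F ∘ₗ LinearMap.inl ℂ D K

/-- The block component `F^{DK} : K → D` of `F ∈ End(D × K)`. -/
noncomputable def blockDK (F : (D × K) →ₗ[ℂ] (D × K)) : K →ₗ[ℂ] D :=
  LinearMap.fst ℂ D K ∘ₗ F ∘ₗ LinearMap.inr ℂ D K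

/-- The block component `F^{KD} : D → K` of `F ∈ End(D × K)`. -/
noncomputable def blockKD (F : (D × K) →ₗ[ℂ] (D × K)) : D →ₗ[ℂ] K :=
  LinearMap.snd ℂ D K ∘ₗ F ∘ₗ LinearMap.inl ℂ D K

/-- The block component `F^{KK} : K → K` of `F ∈ End(D × K)`. -/
noncomputable def blockKK (F : (D × K) →ₗ[ℂ] (D × K)) : K →ₗ[ℂ] K :=
  LinearMap.snd ℂ D K ∘ₗ F ∘ₗ LinearMap.inr ℂ D K

/-- The vector field of the `𝔤𝔩`-action in the chart `Hom(D,K)`: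
`L_F(A) = −F^{KD} − F^{KK} ∘ A + A ∘ F^{DD} + A ∘ F^{DK} ∘ A`. -/
noncomputable def glFlow (F : (D × K) →ₗ[ℂ] (D × K)) (A : D →ₗ[ℂ] K) : D →ₗ[ℂ] K :=
  -blockKD F - blockKK F ∘ₗ A + A ∘ₗ blockDD F + A ∘ₗ blockDK F ∘ₗ A

/-- The cocycle `η_{D,K}(F,G) = tr(F^{DK} ∘ G^{KD}) − tr(G^{DK} ∘ F^{KD})`. -/
noncomputable def etaDK (F G : (D × K) →ₗ[ℂ] (D × K)) : ℂ :=
  LinearMap.trace ℂ D (blockDK F ∘ₗ blockKD G) - LinearMap.trace ℂ D (blockDK G ∘ₗ blockKD F)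

end

/-!
Expanding `L_F(A)` and moving `A` to the right by cyclicity of the trace, `tr(G^{DK} L_F(A))`
splits into a term linear in `A`, the constant `-tr(G^{DK} F^{KD})` and the quadratic term
`tr(G^{DK} A F^{DK} A)`. On antisymmetrising in `F` and `G` the quadratic terms cancel by
cyclicity, the constants give `η_{D,K}(F,G)`, and the linear terms assemble into `[F,G]^{DK}`
by block multiplication.
-/

section

variable {D K : Type*} [AddCommGroup D] [Module ℂ D] [AddCommGroup K] [Module ℂ K]

theorem blockDK_comp (F G : (D × K) →ₗ[ℂ] (D × K)) :
    blockDK (F ∘ₗ G) = blockDD F ∘ₗ blockDK G + blockDK F ∘ₗ blockKK G := by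
  ext y
  simp only [blockDK, blockDD, blockKK, LinearMap.add_apply, LinearMap.comp_apply,
    LinearMap.inl_apply, LinearMap.inr_apply, LinearMap.fst_apply, LinearMap.snd_apply,
    ← Prod.fst_add, ← map_add, Prod.mk_add_mk, add_zero, zero_add]

theorem blockDK_sub (F G : (D × K) →ₗ[ℂ] (D × K)) :
    blockDK (F - G) = blockDK F - blockDK G := by
  simp only [blockDK, LinearMap.sub_comp, LinearMap.comp_sub]

theorem trace_blockDK_comp_glFlow [FiniteDimensional ℂ D] (F G : (D × K) →ₗ[ℂ] (D × K))
    (A : D →ₗ[ℂ] K) :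
    LinearMap.trace ℂ D (blockDK G ∘ₗ glFlow F A) =
      LinearMap.trace ℂ D ((blockDD F ∘ₗ blockDK G - blockDK G ∘ₗ blockKK F) ∘ₗ A) -
        LinearMap.trace ℂ D (blockDK G ∘ₗ blockKD F) +
        LinearMap.trace ℂ D (blockDK G ∘ₗ A ∘ₗ blockDK F ∘ₗ A) := by
  have cyclic : LinearMap.trace ℂ D (blockDK G ∘ₗ A ∘ₗ blockDD F) =
      LinearMap.trace ℂ D (blockDD F ∘ₗ blockDK G ∘ₗ A) :=
    LinearMap.trace_comp_comm' (blockDD F) (blockDK G ∘ₗ A)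
  simp only [glFlow, LinearMap.comp_add, LinearMap.comp_sub, LinearMap.comp_neg,
    LinearMap.sub_comp, LinearMap.comp_assoc, map_add, map_sub, map_neg]
  rw [cyclic]
  ring

end

theorem trace_cocycle_identity_general
    {D K : Type*} [AddCommGroup D] [Module ℂ D] [FiniteDimensional ℂ D]
    [AddCommGroup K] [Module ℂ K]
    (F G : (D × K) →ₗ[ℂ] (D × K)) (A : D →ₗ[ℂ] K) :
    LinearMap.trace ℂ D (blockDK G ∘ₗ glFlow F A) -
        LinearMap.trace ℂ D (blockDK F ∘ₗ glFlow G A) =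
      LinearMap.trace ℂ D (blockDK (F ∘ₗ G - G ∘ₗ F) ∘ₗ A) + etaDK F G := by
  have quadratic_cancel : LinearMap.trace ℂ D (blockDK G ∘ₗ A ∘ₗ blockDK F ∘ₗ A) =
      LinearMap.trace ℂ D (blockDK F ∘ₗ A ∘ₗ blockDK G ∘ₗ A) :=
    LinearMap.trace_comp_comm' (blockDK F ∘ₗ A) (blockDK G ∘ₗ A)
  rw [trace_blockDK_comp_glFlow, trace_blockDK_comp_glFlow, quadratic_cancel, blockDK_sub,
    blockDK_comp, blockDK_comp, etaDK]
  simp only [LinearMap.sub_comp, LinearMap.add_comp, LinearMap.comp_assoc, map_add, map_sub]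
  ring

/-- The trace identity for the scalar part of the lifted `𝔤𝔩`-action on the determinant
line bundle: for finite-dimensional `D`, `K` and all `F, G ∈ End(D × K)`, `A ∈ Hom(D,K)`,
`tr(G^{DK} ∘ L_F(A)) − tr(F^{DK} ∘ L_G(A)) = tr([F,G]^{DK} ∘ A) + η_{D,K}(F,G)`,
where `[F,G] = F ∘ G − G ∘ F`. -/
theorem trace_cocycle_identity
    {D K : Type*} [AddCommGroup D] [Module ℂ D] [FiniteDimensional ℂ D]
    [AddCommGroup K] [Module ℂ K] [FiniteDimensional ℂ K]
    (F G : (D × K) →ₗ[ℂ] (D × K)) (A : D →ₗ[ℂ] K) :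
    LinearMap.trace ℂ D (blockDK G ∘ₗ glFlow F A) -
        LinearMap.trace ℂ D (blockDK F ∘ₗ glFlow G A) =
      LinearMap.trace ℂ D (blockDK (F ∘ₗ G - G ∘ₗ F) ∘ₗ A) + etaDK F G :=
  trace_cocycle_identity_general F G A
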